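/- If G is a connected graph with n(G) ≥ 5 and clique number ω(G) ≤ n(G) - 3, then dim_l(G) ≤ n(G) - 3. -/

import Mathlib

open SimpleGraph

variable {V : Type*}

/-- `W` is a local resolving set of `G`: any two adjacent vertices outside `W`
have different distance to some vertex of `W`. -/
def IsLocalResolvingSet [Fintype V] (G : SimpleGraph V) (W : Finset V) : Prop :=
  ∀ u v : V, u ∉ W → v ∉ W → G.Adj u v → ∃ w ∈ W, G.dist u w ≠ G.dist v w

/-- The local metric dimension of `G`: minimum cardinality of a local resolving set. -/
noncomputable def localDim [Fintype V] (G : SimpleGraph V) : ℕ :=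
  sInf {k | ∃ W : Finset V, IsLocalResolvingSet G W ∧ W.card = k}

/-- `K_n^-(λ,μ)`: complete graph on `Fin n` minus the edges of a complete bipartite
subgraph between `L = [0,lam)` and `M = [lam, lam+mu)`. -/
def KnMinus (n lam mu : ℕ) : SimpleGraph (Fin n) where
  Adj u v := u ≠ v ∧ ¬((u.val < lam ∧ lam ≤ v.val ∧ v.val < lam + mu) ∨
                       (v.val < lam ∧ lam ≤ u.val ∧ u.val < lam + mu))
  symm := by
    constructor
    intro u v ⟨h1, h2⟩
    exact ⟨h1.symm, fun h => h2 h.symm⟩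
  loopless := ⟨fun u h => h.1 rfl⟩

/-- The graph `Γ₁`: a `K₄` on `{0,1,2,3}` plus edges `0-4`, `1-4`, `0-5`, `2-5`
(vertices `0,…,5` standing for `v₁,…,v₆`). -/
def Gamma1 : SimpleGraph (Fin 6) :=
  SimpleGraph.fromRel (fun u v => ((u : ℕ), (v : ℕ)) ∈
    [(0,1),(0,2),(0,3),(1,2),(1,3),(2,3),(0,4),(1,4),(0,5),(2,5)])

/-- The graph `Γ₂ = Γ₁` plus the edge `v₅v₆`. -/
def Gamma2 : SimpleGraph (Fin 6) :=
  SimpleGraph.fromRel (fun u v => ((u : ℕ), (v : ℕ)) ∈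
    [(0,1),(0,2),(0,3),(1,2),(1,3),(2,3),(0,4),(1,4),(0,5),(2,5),(4,5)])

/-- `G_ℓ`: a universal vertex (`none`) joined to the disjoint union of `ℓ` triangles. -/
def Gell (l : ℕ) : SimpleGraph (Option (Fin l × Fin 3)) where
  Adj u v := u ≠ v ∧ ∀ x y, u = some x → v = some y → x.1 = y.1
  symm := by
    constructor
    intro u v ⟨h1, h2⟩
    exact ⟨h1.symm, fun x y hx hy => (h2 y x hy hx).symm⟩
  loopless := ⟨fun u h => h.1 rfl⟩

/-!
Deleting three vertices `T` leaves a local resolving set as soon as every edge inside `T` is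
split by a vertex outside `T`, i.e. one adjacent to exactly one of its ends (distance `1`
versus not `1`). For vertices outside `T`, splitting is the same in `G` and in its complement
`H`, so `T` should contain few edges of `G`: an `H`-triangle works, and so does an `H`-path
`p – q – r` unless `p` and `r` have the same `H`-neighbours. If neither exists, `H` is a
disjoint union of complete bipartite graphs and isolated vertices. Take an `H`-edge `ab`; as
`G` is connected, some `z` lies outside its component, and `{a, b, z}` works: if `z` can be
chosen with an `H`-neighbour, that neighbour splits both edges `az` and `bz` of `G`; otherwise
`ω(G) ≤ n - 2` forces both sides of the component of `ab` to have a second vertex, and these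
split them.
-/

namespace SimpleGraph

def AdjResolvedOutside (G : SimpleGraph V) (T : Finset V) : Prop :=
  ∀ p ∈ T, ∀ q ∈ T, G.Adj p q → ∃ w ∉ T, ¬(G.Adj w p ↔ G.Adj w q)

lemma dist_ne_of_adj_of_not_adj {G : SimpleGraph V} {w p q : V} (hp : G.Adj w p)
    (hq : ¬G.Adj w q) : G.dist p w ≠ G.dist q w := by
  rw [dist_comm, dist_comm (u := q), Ne, dist_eq_one_iff_adj.mpr hp, eq_comm,
    dist_eq_one_iff_adj]
  exact hq

lemma AdjResolvedOutside.isLocalResolvingSet_compl [Fintype V] [DecidableEq V]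
    {G : SimpleGraph V} {T : Finset V} (hT : G.AdjResolvedOutside T) :
    IsLocalResolvingSet G Tᶜ := by
  intro p q hp hq hpq
  rw [Finset.notMem_compl] at hp hq
  obtain ⟨w, hw, hsep⟩ := hT p hp q hq hpq
  refine ⟨w, Finset.mem_compl.mpr hw, ?_⟩
  by_cases hwp : G.Adj w p
  · exact dist_ne_of_adj_of_not_adj hwp (by tauto)
  · exact (dist_ne_of_adj_of_not_adj (by tauto) hwp).symm

lemma localDim_le_card [Fintype V] {G : SimpleGraph V} {W : Finset V}
    (hW : IsLocalResolvingSet G W) : localDim G ≤ W.card :=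
  Nat.sInf_le ⟨W, hW, rfl⟩

lemma exists_compl_adj_of_cliqueNum_lt [Fintype V] {G : SimpleGraph V}
    (hω : G.cliqueNum + 1 < Fintype.card V) (p : V) :
    ∃ u v, u ≠ p ∧ v ≠ p ∧ Gᶜ.Adj u v := by
  classical
  by_contra! h
  have hclique : G.IsClique (Finset.univ.erase p : Set V) := by
    intro u hu v hv huv
    simp only [Finset.coe_erase, Finset.coe_univ, Set.mem_sdiff, Set.mem_univ,
      Set.mem_singleton_iff, true_and] at hu hv
    simpa [compl_adj, huv] using h u v hu hv
  have := hclique.card_le_cliqueNum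
  rw [Finset.card_erase_of_mem (Finset.mem_univ p), Finset.card_univ] at this
  omega

variable {H : SimpleGraph V}

lemma adjResolvedOutside_compl_triple [DecidableEq V] {p q r : V}
    (hpq : ¬H.Adj p q → ∃ w ∉ ({p, q, r} : Finset V), ¬(H.Adj w p ↔ H.Adj w q))
    (hpr : ¬H.Adj p r → ∃ w ∉ ({p, q, r} : Finset V), ¬(H.Adj w p ↔ H.Adj w r))
    (hqr : ¬H.Adj q r → ∃ w ∉ ({p, q, r} : Finset V), ¬(H.Adj w q ↔ H.Adj w r)) :
    Hᶜ.AdjResolvedOutside {p, q, r} := by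
  have key : ∀ x ∈ ({p, q, r} : Finset V), ∀ y ∈ ({p, q, r} : Finset V),
      (∃ w ∉ ({p, q, r} : Finset V), ¬(H.Adj w x ↔ H.Adj w y)) →
      ∃ w ∉ ({p, q, r} : Finset V), ¬(Hᶜ.Adj w x ↔ Hᶜ.Adj w y) := by
    rintro x hx y hy ⟨w, hw, hsep⟩
    refine ⟨w, hw, ?_⟩
    have hwx : w ≠ x := fun h => hw (h ▸ hx)
    have hwy : w ≠ y := fun h => hw (h ▸ hy)
    simpa [compl_adj, hwx, hwy, not_iff_not] using hsep
  intro x hx y hy hxy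
  rw [compl_adj] at hxy
  obtain ⟨hne, hxy⟩ := hxy
  refine key x hx y hy ?_
  simp only [Finset.mem_insert, Finset.mem_singleton] at hx hy
  rcases hx with rfl | rfl | rfl <;> rcases hy with rfl | rfl | rfl
  all_goals first
    | exact absurd rfl hne
    | exact hpq hxy | exact hpr hxy | exact hqr hxy
    | obtain ⟨w, hw, hsep⟩ := hpq fun h => hxy h.symm; exact ⟨w, hw, fun h => hsep h.symm⟩
    | obtain ⟨w, hw, hsep⟩ := hpr fun h => hxy h.symm; exact ⟨w, hw, fun h => hsep h.symm⟩
    | obtain ⟨w, hw, hsep⟩ := hqr fun h => hxy h.symm; exact ⟨w, hw, fun h => hsep h.symm⟩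

/-- The ends of every cherry `p – q – r` are twins; equivalently, every component of `H` is
complete bipartite. -/
def CherryTwins (H : SimpleGraph V) : Prop :=
  ∀ ⦃p q r : V⦄, H.Adj p q → H.Adj q r → ∀ w, H.Adj w p ↔ H.Adj w r

lemma cherryTwins_of_forall_not_mem [DecidableEq V]
    (htri : ∀ p q r, H.Adj p q → H.Adj q r → ¬H.Adj p r)
    (htwin : ∀ p q r, H.Adj p q → H.Adj q r →
      ∀ w ∉ ({p, q, r} : Finset V), H.Adj w p ↔ H.Adj w r) :
    H.CherryTwins := by
  intro p q r hpq hqr w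
  by_cases hw : w ∈ ({p, q, r} : Finset V)
  · simp only [Finset.mem_insert, Finset.mem_singleton] at hw
    rcases hw with rfl | rfl | rfl
    · exact iff_of_false (H.loopless.irrefl _) (htri _ _ _ hpq hqr)
    · exact iff_of_true hpq.symm hqr
    · exact iff_of_false (fun h => htri _ _ _ hpq hqr h.symm) (H.loopless.irrefl _)
  · exact htwin p q r hpq hqr w hw

namespace CherryTwins

lemma adj_or_adj_of_adj (hH : H.CherryTwins) {a b x y : V} (hab : H.Adj a b)
    (hx : H.Adj x a ∨ H.Adj x b) (hxy : H.Adj x y) : H.Adj y a ∨ H.Adj y b := by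
  rcases hx with hxa | hxb
  · exact Or.inr ((hH hxa hab y).mp hxy.symm)
  · exact Or.inl ((hH hxb hab.symm y).mp hxy.symm)

lemma exists_ne_adj (hH : H.CherryTwins) {a b u v : V} (hab : H.Adj a b)
    (hu : H.Adj u a ∨ H.Adj u b) (hub : u ≠ b) (hvb : v ≠ b) (huv : H.Adj u v) :
    ∃ w, w ≠ b ∧ H.Adj w a := by
  rcases hu with hua | hub'
  · exact ⟨u, hub, hua⟩
  · exact ⟨v, hvb, (hH hub' hab.symm v).mp huv.symm⟩

lemma exists_not_adj_not_adj (hH : H.CherryTwins) (hconn : Hᶜ.Connected) {a b : V}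
    (hab : H.Adj a b) : ∃ z, ¬H.Adj z a ∧ ¬H.Adj z b := by
  by_contra! h
  obtain ⟨walk⟩ := hconn.preconnected a b
  obtain ⟨d, -, hx, hy⟩ := walk.exists_boundary_dart {x | H.Adj x b} hab (H.loopless.irrefl b)
  have hya : H.Adj d.snd a := not_not.mp fun hya => hy (h _ hya)
  exact ((compl_adj H _ _).mp d.adj).2 ((hH hx hab.symm _).mpr hya).symm

lemma exists_triple_adjResolvedOutside_compl [DecidableEq V] (hH : H.CherryTwins)
    (hconn : Hᶜ.Connected) (hcover : ∀ p, ∃ u v, u ≠ p ∧ v ≠ p ∧ H.Adj u v) :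
    ∃ p q r : V, p ≠ q ∧ p ≠ r ∧ q ≠ r ∧ Hᶜ.AdjResolvedOutside {p, q, r} := by
  obtain ⟨a, b, -, -, hab⟩ := hcover hconn.nonempty.some
  suffices ∃ z, ¬H.Adj z a ∧ ¬H.Adj z b ∧
      (∃ w ∉ ({a, b, z} : Finset V), ¬(H.Adj w a ↔ H.Adj w z)) ∧
      (∃ w ∉ ({a, b, z} : Finset V), ¬(H.Adj w b ↔ H.Adj w z)) by
    obtain ⟨z, hza, hzb, hsepa, hsepb⟩ := this
    exact ⟨a, b, z, hab.ne, fun h => hzb (h ▸ hab), fun h => hza (h ▸ hab.symm),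
      adjResolvedOutside_compl_triple (absurd hab) (fun _ => hsepa) (fun _ => hsepb)⟩
  have hout {z w : V} (hza : ¬H.Adj z a) (hzb : ¬H.Adj z b) (hw : H.Adj w a ∨ H.Adj w b) :
      ¬H.Adj w z := fun h => not_or.mpr ⟨hza, hzb⟩ (hH.adj_or_adj_of_adj hab hw h)
  by_cases hesc : ∃ z v, ¬H.Adj z a ∧ ¬H.Adj z b ∧ H.Adj z v
  · obtain ⟨z, v, hza, hzb, hzv⟩ := hesc
    obtain ⟨hva, hvb⟩ : ¬H.Adj v a ∧ ¬H.Adj v b :=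
      not_or.mp fun hv => hout hza hzb hv hzv.symm
    have hvT : v ∉ ({a, b, z} : Finset V) := by
      simp only [Finset.mem_insert, Finset.mem_singleton]
      rintro (rfl | rfl | rfl) <;> simp_all
    exact ⟨z, hza, hzb, ⟨v, hvT, by simp [hva, hzv.symm]⟩, ⟨v, hvT, by simp [hvb, hzv.symm]⟩⟩
  · have hS (u v : V) (huv : H.Adj u v) : H.Adj u a ∨ H.Adj u b := by
      by_contra! hu
      exact hesc ⟨u, v, hu.1, hu.2, huv⟩
    obtain ⟨z, hza, hzb⟩ := hH.exists_not_adj_not_adj hconn hab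
    obtain ⟨u, v, hub, hvb, huv⟩ := hcover b
    obtain ⟨w, hwb, hwa⟩ := hH.exists_ne_adj hab (hS u v huv) hub hvb huv
    obtain ⟨u', v', hua', hva', huv'⟩ := hcover a
    obtain ⟨w', hwa', hwb'⟩ :=
      hH.exists_ne_adj hab.symm (hS u' v' huv').symm hua' hva' huv'
    have hwz := hout hza hzb (.inl hwa)
    have hwz' := hout hza hzb (.inr hwb')
    have hwT : w ∉ ({a, b, z} : Finset V) := by
      simp only [Finset.mem_insert, Finset.mem_singleton]
      rintro (rfl | rfl | rfl) <;> simp_all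
    have hwT' : w' ∉ ({a, b, z} : Finset V) := by
      simp only [Finset.mem_insert, Finset.mem_singleton]
      rintro (rfl | rfl | rfl) <;> simp_all
    exact ⟨z, hza, hzb, ⟨w, hwT, by simp [hwa, hwz]⟩, ⟨w', hwT', by simp [hwb', hwz']⟩⟩

end CherryTwins

lemma exists_triple_adjResolvedOutside [Fintype V] [DecidableEq V] {G : SimpleGraph V}
    (hconn : G.Connected) (hω : G.cliqueNum + 1 < Fintype.card V) :
    ∃ p q r : V, p ≠ q ∧ p ≠ r ∧ q ≠ r ∧ G.AdjResolvedOutside {p, q, r} := by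
  rw [← compl_compl G] at hconn ⊢
  by_cases htri : ∃ p q r, Gᶜ.Adj p q ∧ Gᶜ.Adj q r ∧ Gᶜ.Adj p r
  · obtain ⟨p, q, r, hpq, hqr, hpr⟩ := htri
    exact ⟨p, q, r, hpq.ne, hpr.ne, hqr.ne,
      adjResolvedOutside_compl_triple (absurd hpq) (absurd hpr) (absurd hqr)⟩
  by_cases hcherry : ∃ p q r, Gᶜ.Adj p q ∧ Gᶜ.Adj q r ∧
      ∃ w ∉ ({p, q, r} : Finset V), ¬(Gᶜ.Adj w p ↔ Gᶜ.Adj w r)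
  · obtain ⟨p, q, r, hpq, hqr, w, hw, hsep⟩ := hcherry
    have hpr : p ≠ r := by rintro rfl; exact hsep Iff.rfl
    exact ⟨p, q, r, hpq.ne, hpr, hqr.ne,
      adjResolvedOutside_compl_triple (absurd hpq) (fun _ => ⟨w, hw, hsep⟩) (absurd hqr)⟩
  push Not at htri hcherry
  exact (cherryTwins_of_forall_not_mem htri hcherry).exists_triple_adjResolvedOutside_compl
    hconn (exists_compl_adj_of_cliqueNum_lt hω)

end SimpleGraph

/-- If `G` is connected, `n(G) ≥ 5` and `ω(G) ≤ n(G) - 3`, then `dim_l(G) ≤ n(G) - 3`. -/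
theorem stmt_7 [Fintype V] (G : SimpleGraph V) (hconn : G.Connected)
    (hn : 5 ≤ Fintype.card V) (hw : G.cliqueNum ≤ Fintype.card V - 3) :
    localDim G ≤ Fintype.card V - 3 := by
  classical
  obtain ⟨p, q, r, hpq, hpr, hqr, hres⟩ := exists_triple_adjResolvedOutside hconn (by omega)
  calc localDim G ≤ ({p, q, r}ᶜ : Finset V).card :=
        localDim_le_card hres.isLocalResolvingSet_compl
    _ = Fintype.card V - 3 := by
      rw [Finset.card_compl, Finset.card_eq_three.mpr ⟨p, q, r, hpq, hpr, hqr, rfl⟩]
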